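/- Let n ≥ 1 and let f : 2^{[n]} → ℝ be any set function. The Lovász extension f_L is a convex function on [0,1]^n if and only if f is submodular, i.e., f(A) + f(B) ≥ f(A ∪ B) + f(A ∩ B) for all A, B ⊆ [n]. -/

import Mathlib

open Finset

/-- The chain set `A_i = {π(0), …, π(i-1)}` determined by a permutation `π` of `Fin n`
(0-indexed version of `{π(1), …, π(i)}`). -/
def chainSet {n : ℕ} (π : Equiv.Perm (Fin n)) (i : ℕ) : Finset (Fin n) :=
  Finset.univ.filter fun j => (π.symm j : ℕ) < i

/-- Extended sorted coordinates: `extCoord x π 0 = 1`, `extCoord x π i = x (π (i-1))`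
for `1 ≤ i ≤ n`, and `extCoord x π i = 0` for `i > n`. -/
def extCoord {n : ℕ} (x : Fin n → ℝ) (π : Equiv.Perm (Fin n)) (i : ℕ) : ℝ :=
  if h : 1 ≤ i ∧ i ≤ n then x (π ⟨i - 1, by omega⟩) else if i = 0 then 1 else 0

/-- The weight `λ_i = x_{π(i)} - x_{π(i+1)}` (with the conventions `x_{π(0)} = 1`,
`x_{π(n+1)} = 0`). -/
def chainWeight {n : ℕ} (x : Fin n → ℝ) (π : Equiv.Perm (Fin n)) (i : ℕ) : ℝ :=
  extCoord x π i - extCoord x π (i + 1)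

/-- The Lovász-extension formula `∑_{i=0}^n λ_i f(A_i)` evaluated with permutation `π`. -/
def lovasz {n : ℕ} (f : Finset (Fin n) → ℝ) (x : Fin n → ℝ) (π : Equiv.Perm (Fin n)) : ℝ :=
  ∑ i ∈ Finset.range (n + 1), chainWeight x π i * f (chainSet π i)

/-- `π` sorts the coordinates of `x` in nonincreasing order. -/
def isSorting {n : ℕ} (x : Fin n → ℝ) (π : Equiv.Perm (Fin n)) : Prop :=
  ∀ i j : Fin n, i ≤ j → x (π j) ≤ x (π i)

/-- The chain gradient `g(x; f)`, defined by `g_{π(i)} = f(A_i) - f(A_{i-1})`. -/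
def chainGrad {n : ℕ} (f : Finset (Fin n) → ℝ) (π : Equiv.Perm (Fin n)) : Fin n → ℝ :=
  fun j => f (chainSet π ((π.symm j : ℕ) + 1)) - f (chainSet π (π.symm j : ℕ))

/-- Membership in the unit hypercube `[0,1]^n`. -/
def inCube {n : ℕ} (x : Fin n → ℝ) : Prop := ∀ i, 0 ≤ x i ∧ x i ≤ 1

variable {n : ℕ}

lemma mem_chainSet (π : Equiv.Perm (Fin n)) {j : Fin n} {i : ℕ} :
    j ∈ chainSet π i ↔ (π.symm j : ℕ) < i := by simp [chainSet]

lemma chainSet_zero (π : Equiv.Perm (Fin n)) : chainSet π 0 = ∅ := by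
  simp [chainSet]

lemma chainSet_of_le (π : Equiv.Perm (Fin n)) {i : ℕ} (h : n ≤ i) : chainSet π i = univ := by
  ext j; simp [mem_chainSet]; exact lt_of_lt_of_le (π.symm j).2 h

lemma chainSet_succ (π : Equiv.Perm (Fin n)) (i : Fin n) :
    chainSet π ((i : ℕ) + 1) = insert (π i) (chainSet π (i : ℕ)) := by
  ext j
  simp only [mem_chainSet, mem_insert, Nat.lt_succ_iff_lt_or_eq]
  constructor
  · rintro (h | h)
    · exact Or.inr h
    · left
      have : π.symm j = i := Fin.ext h
      rw [← this]; simp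
  · rintro (h | h)
    · right; rw [h]; simp
    · exact Or.inl h

lemma pi_not_mem_chainSet (π : Equiv.Perm (Fin n)) (i : Fin n) :
    π i ∉ chainSet π (i : ℕ) := by simp [mem_chainSet]

lemma extCoord_zero (x : Fin n → ℝ) (π : Equiv.Perm (Fin n)) : extCoord x π 0 = 1 := by
  simp [extCoord]

lemma extCoord_top (x : Fin n → ℝ) (π : Equiv.Perm (Fin n)) {i : ℕ} (h : n < i) :
    extCoord x π i = 0 := by
  have h1 : ¬ (1 ≤ i ∧ i ≤ n) := by omega
  have h2 : i ≠ 0 := by omega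
  simp [extCoord, h1, h2]

lemma extCoord_succ (x : Fin n → ℝ) (π : Equiv.Perm (Fin n)) (i : Fin n) :
    extCoord x π ((i : ℕ) + 1) = x (π i) := by
  have h : 1 ≤ (i : ℕ) + 1 ∧ (i : ℕ) + 1 ≤ n := ⟨by omega, i.2⟩
  simp only [extCoord, dif_pos h]
  congr 1

lemma telescope_Ico (g : ℕ → ℝ) (a : ℕ) : ∀ b, a ≤ b →
    ∑ i ∈ Finset.Ico a b, (g i - g (i + 1)) = g a - g b := by
  intro b
  induction b with
  | zero => intro h; interval_cases a; simp
  | succ b ih =>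
    intro h
    rcases Nat.lt_or_ge a (b+1) with h' | h'
    · have hab : a ≤ b := by omega
      rw [Finset.sum_Ico_succ_top hab, ih hab]; ring
    · have : a = b + 1 := by omega
      subst this; simp

lemma sum_chainWeight (x : Fin n → ℝ) (π : Equiv.Perm (Fin n)) :
    ∑ i ∈ Finset.range (n + 1), chainWeight x π i = 1 := by
  unfold chainWeight
  rw [Finset.sum_range_sub' (fun i => extCoord x π i) (n+1)]
  rw [extCoord_zero, extCoord_top x π (by omega)]
  ring

lemma lovasz_eq_grad (f : Finset (Fin n) → ℝ) (x : Fin n → ℝ) (π : Equiv.Perm (Fin n)) :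
    lovasz f x π = f ∅ + ∑ j : Fin n, x j * chainGrad f π j := by
  have key : ∑ j : Fin n, x j * chainGrad f π j
      = ∑ i ∈ Finset.range n, extCoord x π (i+1) *
          (f (chainSet π (i+1)) - f (chainSet π i)) := by
    rw [← Equiv.sum_comp π (fun j => x j * chainGrad f π j)]
    rw [← Fin.sum_univ_eq_sum_range (fun i => extCoord x π (i+1) *
          (f (chainSet π (i+1)) - f (chainSet π i))) n]
    refine Finset.sum_congr rfl fun i _ => ?_
    simp [chainGrad, extCoord_succ]
  have expand : lovasz f x π
      = (∑ i ∈ Finset.range (n+1),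
          (extCoord x π i * f (chainSet π i) - extCoord x π (i+1) * f (chainSet π (i+1))))
        + ∑ i ∈ Finset.range (n+1),
            extCoord x π (i+1) * (f (chainSet π (i+1)) - f (chainSet π i)) := by
    unfold lovasz chainWeight
    rw [← Finset.sum_add_distrib]
    refine Finset.sum_congr rfl fun i _ => by ring
  rw [expand, key]
  rw [Finset.sum_range_sub' (fun i => extCoord x π i * f (chainSet π i)) (n+1)]
  rw [extCoord_zero, extCoord_top x π (show n < n+1 by omega), chainSet_zero]
  rw [Finset.sum_range_succ, extCoord_top x π (show n < n+1 by omega)]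
  ring

lemma sum_grad_chainSet (f : Finset (Fin n) → ℝ) (π : Equiv.Perm (Fin n)) {k : ℕ} (hk : k ≤ n) :
    ∑ j ∈ chainSet π k, chainGrad f π j = f (chainSet π k) - f ∅ := by
  have h1 : ∑ j ∈ chainSet π k, chainGrad f π j
      = ∑ j : Fin n, if (π.symm j : ℕ) < k then chainGrad f π j else 0 := by
    rw [← Finset.sum_filter]
    rfl
  have h2 : ∑ j : Fin n, (if (π.symm j : ℕ) < k then chainGrad f π j else 0)
      = ∑ i : Fin n, (if (i : ℕ) < k then
          f (chainSet π ((i : ℕ) + 1)) - f (chainSet π (i : ℕ)) else 0) := by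
    rw [← Equiv.sum_comp π (fun j => if (π.symm j : ℕ) < k then chainGrad f π j else 0)]
    refine Finset.sum_congr rfl fun i _ => ?_
    simp [chainGrad]
  rw [h1, h2]
  rw [Fin.sum_univ_eq_sum_range (fun i => if i < k then
        f (chainSet π (i + 1)) - f (chainSet π i) else 0) n]
  rw [← Finset.sum_subset (Finset.range_subset_range.mpr hk)
    (by intro i _ hi; simp at hi ⊢; omega)]
  rw [Finset.sum_congr rfl (fun i hi => if_pos (Finset.mem_range.mp hi))]
  rw [Finset.sum_range_sub (fun i => f (chainSet π i)) k, chainSet_zero]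

lemma downclosed_mem_iff (I : Finset (Fin n)) (h : ∀ i j : Fin n, i ≤ j → j ∈ I → i ∈ I)
    (i : Fin n) : i ∈ I ↔ (i : ℕ) < I.card := by
  constructor
  · intro hi
    have hsub : Finset.Iic i ⊆ I := fun j hj => h j i (Finset.mem_Iic.mp hj) hi
    have := Finset.card_le_card hsub
    rw [Fin.card_Iic] at this; omega
  · intro hi
    by_contra hni
    have hsub : I ⊆ Finset.Iio i := by
      intro j hj
      rw [Finset.mem_Iio]
      by_contra hji
      exact hni (h i j (le_of_not_gt hji) hj)
    have := Finset.card_le_card hsub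
    rw [Fin.card_Iio] at this; omega

lemma threshold_eq_chainSet (x : Fin n → ℝ) (π : Equiv.Perm (Fin n)) (hπ : isSorting x π)
    (t : ℝ) : univ.filter (fun j => t ≤ x j)
      = chainSet π (univ.filter (fun j => t ≤ x j)).card := by
  set S : Finset (Fin n) := univ.filter (fun j => t ≤ x j) with hS
  set I : Finset (Fin n) := S.image π.symm with hI
  have hmemI : ∀ i : Fin n, i ∈ I ↔ π i ∈ S := by
    intro i
    simp only [hI, Finset.mem_image]
    constructor
    · rintro ⟨j, hj, rfl⟩; simpa using hj
    · intro h; exact ⟨π i, h, by simp⟩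
  have hcard : I.card = S.card := Finset.card_image_of_injective _ π.symm.injective
  have hdc : ∀ i j : Fin n, i ≤ j → j ∈ I → i ∈ I := by
    intro i j hij hj
    rw [hmemI] at *
    simp only [hS, Finset.mem_filter, Finset.mem_univ, true_and] at *
    exact le_trans hj (hπ i j hij)
  ext j
  rw [mem_chainSet]
  have := downclosed_mem_iff I hdc (π.symm j)
  rw [hmemI, Equiv.apply_symm_apply, hcard] at this
  exact this

lemma exists_sorting (x : Fin n → ℝ) : ∃ π : Equiv.Perm (Fin n), isSorting x π := by
  refine ⟨Tuple.sort (fun i => -x i), fun i j hij => ?_⟩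
  have := Tuple.monotone_sort (fun i => -x i) hij
  simpa using this

lemma chainWeight_nonneg {x : Fin n → ℝ} (hx : inCube x) {π : Equiv.Perm (Fin n)}
    (hπ : isSorting x π) (i : ℕ) : 0 ≤ chainWeight x π i := by
  unfold chainWeight
  rcases Nat.eq_zero_or_pos i with rfl | hi
  · rcases Nat.eq_zero_or_pos n with hn | hn
    · rw [extCoord_zero, extCoord_top x π (by omega)]; norm_num
    · rw [extCoord_zero]
      have e1 : extCoord x π 1 = x (π ⟨0, hn⟩) := by
        have h : 1 ≤ 1 ∧ 1 ≤ n := ⟨le_refl 1, hn⟩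
        simp only [extCoord, dif_pos h]
      rw [e1]; linarith [(hx (π ⟨0, hn⟩)).2]
  · rcases Nat.lt_or_ge i n with hlt | hge
    · have e1 : extCoord x π i = x (π ⟨i - 1, by omega⟩) := by
        have h : 1 ≤ i ∧ i ≤ n := ⟨hi, le_of_lt hlt⟩
        simp only [extCoord, dif_pos h]
      have e2 : extCoord x π (i + 1) = x (π ⟨i, hlt⟩) := extCoord_succ x π ⟨i, hlt⟩
      rw [e1, e2]
      have hle : (⟨i - 1, by omega⟩ : Fin n) ≤ ⟨i, hlt⟩ := by
        simp only [Fin.le_def]; omega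
      linarith [hπ _ _ hle]
    · rcases Nat.eq_or_lt_of_le hge with heq | hlt
      · have e1 : extCoord x π i = x (π ⟨i - 1, by omega⟩) := by
          have h : 1 ≤ i ∧ i ≤ n := ⟨hi, le_of_eq heq.symm⟩
          simp only [extCoord, dif_pos h]
        rw [e1, extCoord_top x π (by omega)]
        linarith [(hx (π ⟨i - 1, by omega⟩)).1]
      · rw [extCoord_top x π hlt, extCoord_top x π (by omega)]; norm_num

lemma coord_decomp (x : Fin n → ℝ) (π : Equiv.Perm (Fin n)) (j : Fin n) :
    x j = ∑ i ∈ Finset.range (n + 1),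
        chainWeight x π i * (if j ∈ chainSet π i then (1 : ℝ) else 0) := by
  have hkn : (π.symm j : ℕ) < n := (π.symm j).2
  have hsplit : Finset.range (n + 1)
      = Finset.range ((π.symm j : ℕ) + 1) ∪ Finset.Ico ((π.symm j : ℕ) + 1) (n + 1) := by
    rw [Finset.range_eq_Ico, Finset.range_eq_Ico]
    rw [Finset.Ico_union_Ico_eq_Ico (by omega) (by omega)]
  rw [hsplit, Finset.sum_union (by
    rw [Finset.range_eq_Ico]
    exact Finset.Ico_disjoint_Ico_consecutive 0 ((π.symm j : ℕ)+1) (n+1))]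
  have hz : ∑ i ∈ Finset.range ((π.symm j : ℕ) + 1),
      chainWeight x π i * (if j ∈ chainSet π i then (1 : ℝ) else 0) = 0 := by
    refine Finset.sum_eq_zero fun i hi => ?_
    rw [Finset.mem_range] at hi
    rw [if_neg (by rw [mem_chainSet]; omega), mul_zero]
  have ho : ∑ i ∈ Finset.Ico ((π.symm j : ℕ) + 1) (n + 1),
      chainWeight x π i * (if j ∈ chainSet π i then (1 : ℝ) else 0)
      = ∑ i ∈ Finset.Ico ((π.symm j : ℕ) + 1) (n + 1),
          (extCoord x π i - extCoord x π (i + 1)) := by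
    refine Finset.sum_congr rfl fun i hi => ?_
    rw [Finset.mem_Ico] at hi
    rw [if_pos (by rw [mem_chainSet]; omega), mul_one]
    rfl
  rw [hz, ho, telescope_Ico (fun i => extCoord x π i) ((π.symm j : ℕ)+1) (n+1) (by omega)]
  have htop : extCoord x π (n + 1) = 0 := extCoord_top x π (by omega)
  have hkk : extCoord x π ((π.symm j : ℕ) + 1) = x j := by
    have h := extCoord_succ x π (π.symm j)
    rwa [Equiv.apply_symm_apply] at h
  rw [htop, hkk]
  ring

lemma sum_grad_le {f : Finset (Fin n) → ℝ}
    (hsub : ∀ A B : Finset (Fin n), f (A ∪ B) + f (A ∩ B) ≤ f A + f B)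
    (π : Equiv.Perm (Fin n)) (B : Finset (Fin n)) :
    ∑ j ∈ B, chainGrad f π j ≤ f B - f ∅ := by
  have h1 : ∑ j ∈ B, chainGrad f π j
      = ∑ j : Fin n, if j ∈ B then chainGrad f π j else 0 := by
    rw [Finset.sum_ite_mem, Finset.univ_inter]
  have h2 : ∑ j : Fin n, (if j ∈ B then chainGrad f π j else 0)
      = ∑ i : Fin n, (if π i ∈ B then
          f (chainSet π ((i : ℕ) + 1)) - f (chainSet π (i : ℕ)) else 0) := by
    rw [← Equiv.sum_comp π (fun j => if j ∈ B then chainGrad f π j else 0)]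
    refine Finset.sum_congr rfl fun i _ => ?_
    simp [chainGrad]
  have hterm : ∀ i : Fin n,
      (if π i ∈ B then f (chainSet π ((i : ℕ) + 1)) - f (chainSet π (i : ℕ)) else 0)
      ≤ f (chainSet π ((i : ℕ) + 1) ∩ B) - f (chainSet π (i : ℕ) ∩ B) := by
    intro i
    by_cases hB : π i ∈ B
    · rw [if_pos hB]
      have hins := chainSet_succ π i
      have hnm := pi_not_mem_chainSet π i
      set S := chainSet π (i : ℕ) with hS
      have hu : S ∪ (insert (π i) S ∩ B) = insert (π i) S := by
        ext a
        simp only [Finset.mem_union, Finset.mem_inter, Finset.mem_insert]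
        constructor
        · rintro (h | ⟨h1, h2⟩)
          · exact Or.inr h
          · exact h1
        · rintro (rfl | h)
          · exact Or.inr ⟨Or.inl rfl, hB⟩
          · exact Or.inl h
      have hi : S ∩ (insert (π i) S ∩ B) = S ∩ B := by
        ext a
        simp only [Finset.mem_inter, Finset.mem_insert]
        constructor
        · rintro ⟨h1, _, h3⟩
          exact ⟨h1, h3⟩
        · rintro ⟨h1, h2⟩
          exact ⟨h1, Or.inr h1, h2⟩
      have := hsub S (insert (π i) S ∩ B)
      rw [hu, hi] at this
      rw [hins]
      linarith
    · rw [if_neg hB]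
      have : chainSet π ((i : ℕ) + 1) ∩ B = chainSet π (i : ℕ) ∩ B := by
        rw [chainSet_succ]
        ext a
        simp only [Finset.mem_inter, Finset.mem_insert]
        constructor
        · rintro ⟨rfl | h, h2⟩
          · exact absurd h2 hB
          · exact ⟨h, h2⟩
        · rintro ⟨h1, h2⟩
          exact ⟨Or.inr h1, h2⟩
      rw [this, sub_self]
  have h3 : ∑ i : Fin n, (f (chainSet π ((i : ℕ) + 1) ∩ B) - f (chainSet π (i : ℕ) ∩ B))
      = f B - f ∅ := by
    rw [Fin.sum_univ_eq_sum_range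
      (fun i => f (chainSet π (i + 1) ∩ B) - f (chainSet π i ∩ B)) n]
    rw [Finset.sum_range_sub (fun i => f (chainSet π i ∩ B)) n]
    rw [chainSet_zero, chainSet_of_le π (le_refl n), Finset.univ_inter, Finset.empty_inter]
  calc ∑ j ∈ B, chainGrad f π j
      = ∑ i : Fin n, (if π i ∈ B then
          f (chainSet π ((i : ℕ) + 1)) - f (chainSet π (i : ℕ)) else 0) := by rw [h1, h2]
    _ ≤ ∑ i : Fin n, (f (chainSet π ((i : ℕ) + 1) ∩ B) - f (chainSet π (i : ℕ) ∩ B)) :=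
        Finset.sum_le_sum fun i _ => hterm i
    _ = f B - f ∅ := h3

lemma grad_inner_le_lovasz {f : Finset (Fin n) → ℝ}
    (hsub : ∀ A B : Finset (Fin n), f (A ∪ B) + f (A ∩ B) ≤ f A + f B)
    {w : Fin n → ℝ} (hw : inCube w) (π σ : Equiv.Perm (Fin n)) (hσ : isSorting w σ) :
    f ∅ + ∑ j : Fin n, w j * chainGrad f π j ≤ lovasz f w σ := by
  have hswap : ∑ j : Fin n, w j * chainGrad f π j
      = ∑ i ∈ Finset.range (n + 1), chainWeight w σ i * ∑ j ∈ chainSet σ i, chainGrad f π j := by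
    calc ∑ j : Fin n, w j * chainGrad f π j
        = ∑ j : Fin n, ∑ i ∈ Finset.range (n + 1),
            chainWeight w σ i * (if j ∈ chainSet σ i then (1:ℝ) else 0) * chainGrad f π j := by
          refine Finset.sum_congr rfl fun j _ => ?_
          rw [← Finset.sum_mul, ← coord_decomp w σ j]
      _ = ∑ i ∈ Finset.range (n + 1), ∑ j : Fin n,
            chainWeight w σ i * (if j ∈ chainSet σ i then (1:ℝ) else 0) * chainGrad f π j :=
          Finset.sum_comm
      _ = ∑ i ∈ Finset.range (n + 1), chainWeight w σ i * ∑ j ∈ chainSet σ i, chainGrad f π j := by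
          refine Finset.sum_congr rfl fun i _ => ?_
          have hcase : ∀ j : Fin n,
              chainWeight w σ i * (if j ∈ chainSet σ i then (1:ℝ) else 0) * chainGrad f π j
              = if j ∈ chainSet σ i then chainWeight w σ i * chainGrad f π j else 0 := by
            intro j; by_cases hj : j ∈ chainSet σ i <;> simp [hj]
          rw [Finset.sum_congr rfl (fun j _ => hcase j), Finset.sum_ite_mem,
            Finset.univ_inter, ← Finset.mul_sum]
  have hbound : ∑ i ∈ Finset.range (n + 1), chainWeight w σ i * ∑ j ∈ chainSet σ i, chainGrad f π j
      ≤ ∑ i ∈ Finset.range (n + 1), chainWeight w σ i * (f (chainSet σ i) - f ∅) := by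
    refine Finset.sum_le_sum fun i _ => ?_
    exact mul_le_mul_of_nonneg_left (sum_grad_le hsub π (chainSet σ i))
      (chainWeight_nonneg hw hσ i)
  have hfinal : f ∅ + ∑ i ∈ Finset.range (n + 1), chainWeight w σ i * (f (chainSet σ i) - f ∅)
      = lovasz f w σ := by
    unfold lovasz
    have : ∑ i ∈ Finset.range (n + 1), chainWeight w σ i * (f (chainSet σ i) - f ∅)
        = ∑ i ∈ Finset.range (n + 1), chainWeight w σ i * f (chainSet σ i)
          - (∑ i ∈ Finset.range (n + 1), chainWeight w σ i) * f ∅ := by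
      rw [Finset.sum_mul, ← Finset.sum_sub_distrib]
      refine Finset.sum_congr rfl fun i _ => by ring
    rw [this, sum_chainWeight]
    ring
  rw [hswap]
  linarith

lemma mem_Icc_iff_inCube (x : Fin n → ℝ) :
    x ∈ Set.Icc (0 : Fin n → ℝ) 1 ↔ inCube x := by
  simp only [Set.mem_Icc, inCube, Pi.le_def, Pi.zero_apply, Pi.one_apply]
  constructor
  · rintro ⟨h1, h2⟩ i; exact ⟨h1 i, h2 i⟩
  · intro h; exact ⟨fun i => (h i).1, fun i => (h i).2⟩

lemma sum_indicator_mul (g : Fin n → ℝ) (C : Finset (Fin n)) :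
    ∑ j : Fin n, (if j ∈ C then (1:ℝ) else 0) * g j = ∑ j ∈ C, g j := by
  calc ∑ j : Fin n, (if j ∈ C then (1:ℝ) else 0) * g j
      = ∑ j : Fin n, if j ∈ C then g j else 0 :=
        Finset.sum_congr rfl fun j _ => by by_cases h : j ∈ C <;> simp [h]
    _ = ∑ j ∈ univ ∩ C, g j := Finset.sum_ite_mem _ _ _
    _ = ∑ j ∈ C, g j := by rw [Finset.univ_inter]

lemma sum_grad_of_threshold {x : Fin n → ℝ} {π : Equiv.Perm (Fin n)} (hπ : isSorting x π)
    (f : Finset (Fin n) → ℝ) (t : ℝ) (C : Finset (Fin n))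
    (hC : univ.filter (fun j => t ≤ x j) = C) :
    ∑ j ∈ C, chainGrad f π j = f C - f ∅ := by
  have h1 : C = chainSet π C.card := by
    have h := threshold_eq_chainSet x π hπ t
    rwa [hC] at h
  have hcard : C.card ≤ n := by
    have := Finset.card_le_univ C
    simpa using this
  conv_lhs => rw [h1]
  rw [sum_grad_chainSet f π hcard, ← h1]


/-- the Lovász extension (any function agreeing with the
Lovász-extension formula on the cube) is convex on `[0,1]^n` iff `f` is submodular. -/
theorem lovasz_convexOn_iff_submodular (n : ℕ) (hn : 1 ≤ n) (f : Finset (Fin n) → ℝ)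
    (F : (Fin n → ℝ) → ℝ)
    (hF : ∀ x : Fin n → ℝ, inCube x → ∀ π : Equiv.Perm (Fin n), isSorting x π →
      F x = lovasz f x π) :
    ConvexOn ℝ (Set.Icc (0 : Fin n → ℝ) 1) F ↔
      ∀ A B : Finset (Fin n), f (A ∪ B) + f (A ∩ B) ≤ f A + f B := by
  constructor
  · intro hc A B
    set χ : Finset (Fin n) → Fin n → ℝ := fun C j => if j ∈ C then 1 else 0 with hχ
    have hcube : ∀ C, inCube (χ C) := by
      intro C j; simp only [hχ]; split_ifs <;> norm_num
    have hIcc : ∀ C, χ C ∈ Set.Icc (0 : Fin n → ℝ) 1 :=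
      fun C => (mem_Icc_iff_inCube _).mpr (hcube C)
    -- value on indicators
    have hval : ∀ C : Finset (Fin n), F (χ C) = f C := by
      intro C
      obtain ⟨π, hπ⟩ := exists_sorting (χ C)
      rw [hF _ (hcube C) π hπ, lovasz_eq_grad]
      have hthr : univ.filter (fun j => (1:ℝ) ≤ χ C j) = C := by
        ext j; by_cases h : j ∈ C <;> simp [hχ, h]
      rw [show (fun j => χ C j * chainGrad f π j) = fun j => (if j ∈ C then (1:ℝ) else 0) * chainGrad f π j from rfl]
      rw [sum_indicator_mul (chainGrad f π) C,
        sum_grad_of_threshold hπ f 1 C hthr]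
      ring
    -- value at the midpoint
    set z : Fin n → ℝ := fun j => (χ A j + χ B j) / 2 with hz
    have hzcube : inCube z := by
      intro j; simp only [hz, hχ]; split_ifs <;> norm_num
    obtain ⟨π, hπ⟩ := exists_sorting z
    have hthrU : univ.filter (fun j => (1:ℝ)/2 ≤ z j) = A ∪ B := by
      ext j
      by_cases hA : j ∈ A <;> by_cases hB : j ∈ B <;>
        simp [hz, hχ, hA, hB] <;> norm_num
    have hthrI : univ.filter (fun j => (1:ℝ) ≤ z j) = A ∩ B := by
      ext j
      by_cases hA : j ∈ A <;> by_cases hB : j ∈ B <;>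
        simp [hz, hχ, hA, hB] <;> norm_num
    have hFz : F z = (f (A ∪ B) + f (A ∩ B)) / 2 := by
      rw [hF z hzcube π hπ, lovasz_eq_grad]
      have hsplit : ∑ j : Fin n, z j * chainGrad f π j
          = (∑ j ∈ A, chainGrad f π j + ∑ j ∈ B, chainGrad f π j) / 2 := by
        rw [← sum_indicator_mul (chainGrad f π) A, ← sum_indicator_mul (chainGrad f π) B]
        rw [← Finset.sum_add_distrib, Finset.sum_div]
        refine Finset.sum_congr rfl fun j _ => ?_
        simp only [hz, hχ]; ring
      have hUI : ∑ j ∈ A, chainGrad f π j + ∑ j ∈ B, chainGrad f π j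
          = ∑ j ∈ A ∪ B, chainGrad f π j + ∑ j ∈ A ∩ B, chainGrad f π j :=
        (Finset.sum_union_inter).symm
      rw [hsplit, hUI, sum_grad_of_threshold hπ f (1/2) (A ∪ B) hthrU,
        sum_grad_of_threshold hπ f 1 (A ∩ B) hthrI]
      ring
    have hmid : (1/2 : ℝ) • χ A + (1/2 : ℝ) • χ B = z := by
      funext j
      simp only [Pi.add_apply, Pi.smul_apply, smul_eq_mul, hz]
      ring
    have hineq := hc.2 (hIcc A) (hIcc B) (by norm_num : (0:ℝ) ≤ 1/2)
      (by norm_num : (0:ℝ) ≤ 1/2) (by norm_num)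
    rw [hmid, hFz, hval A, hval B, smul_eq_mul, smul_eq_mul] at hineq
    linarith
  · intro hsub
    refine ⟨convex_Icc 0 1, ?_⟩
    intro x hx y hy a b ha hb hab
    have hzmem : a • x + b • y ∈ Set.Icc (0 : Fin n → ℝ) 1 :=
      (convex_Icc 0 1) hx hy ha hb hab
    obtain ⟨π, hπ⟩ := exists_sorting (a • x + b • y)
    rw [hF _ ((mem_Icc_iff_inCube _).mp hzmem) π hπ, lovasz_eq_grad]
    have hexp : ∑ j : Fin n, (a • x + b • y) j * chainGrad f π j
        = a * ∑ j : Fin n, x j * chainGrad f π j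
          + b * ∑ j : Fin n, y j * chainGrad f π j := by
      rw [Finset.mul_sum, Finset.mul_sum, ← Finset.sum_add_distrib]
      refine Finset.sum_congr rfl fun j _ => ?_
      simp only [Pi.add_apply, Pi.smul_apply, smul_eq_mul]
      ring
    obtain ⟨σx, hσx⟩ := exists_sorting x
    obtain ⟨σy, hσy⟩ := exists_sorting y
    have hxle : f ∅ + ∑ j : Fin n, x j * chainGrad f π j ≤ F x := by
      rw [hF x ((mem_Icc_iff_inCube x).mp hx) σx hσx]
      exact grad_inner_le_lovasz hsub ((mem_Icc_iff_inCube x).mp hx) π σx hσx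
    have hyle : f ∅ + ∑ j : Fin n, y j * chainGrad f π j ≤ F y := by
      rw [hF y ((mem_Icc_iff_inCube y).mp hy) σy hσy]
      exact grad_inner_le_lovasz hsub ((mem_Icc_iff_inCube y).mp hy) π σy hσy
    have hax := mul_le_mul_of_nonneg_left hxle ha
    have hby := mul_le_mul_of_nonneg_left hyle hb
    rw [hexp]
    simp only [smul_eq_mul]
    have hsum : a * f ∅ + b * f ∅ = f ∅ := by rw [← add_mul, hab, one_mul]
    linarith
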